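/- Let F be a gauge on ℝ² and F_a its associated gauge. For nonzero x, y ∈ ℝ², the condition [x,y] = F(x)·F_a(y) (i.e., x is Birkhoff orthogonal to y with respect to F) holds if and only if [y,-x] = F_a(y)·F_{a,a}(-x) (i.e., y is Birkhoff orthogonal to -x with respect to F_a). -/

import Mathlib

noncomputable section

/-- The determinant form `[x,y] = x₁y₂ − x₂y₁`. -/
def det2 (x y : ℝ × ℝ) : ℝ := x.1 * y.2 - x.2 * y.1

/-- A gauge (convex distance function) on ℝ². -/
def IsGauge (F : ℝ × ℝ → ℝ) : Prop :=
  (∀ x, 0 ≤ F x) ∧ (∀ x, F x = 0 ↔ x = 0) ∧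
  (∀ (l : ℝ) (x : ℝ × ℝ), 0 < l → F (l • x) = l * F x) ∧
  (∀ x y, F (x + y) ≤ F x + F y)

/-- The associated gauge `F_a(x) = sup {[y,x] : F(y) = 1}`. -/
def assocGauge (F : ℝ × ℝ → ℝ) (x : ℝ × ℝ) : ℝ :=
  sSup {d : ℝ | ∃ y, F y = 1 ∧ d = det2 y x}

/-!
Since `[y, -x] = [x, y]`, the theorem reduces to the bipolar identity `F_{a,a}(-x) = F(x)`.
The inequality `[x, u] ≤ F(x) F_a(u)` gives `≤`; for `≥`, Hahn–Banach yields a linear functional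
`[·, w] ≤ F` with `[x, w] = F(x)`, and then `F_a(w) = 1`, so `w` attains the supremum.
-/

open Set

lemma det2_smul_left (c : ℝ) (x v : ℝ × ℝ) : det2 (c • x) v = c * det2 x v := by
  simp only [det2, Prod.smul_fst, Prod.smul_snd, smul_eq_mul]
  ring

lemma det2_neg_right (x y : ℝ × ℝ) : det2 y (-x) = det2 x y := by
  simp only [det2, Prod.fst_neg, Prod.snd_neg]
  ring

lemma det2_le_two_mul_norm (z v : ℝ × ℝ) : det2 z v ≤ 2 * (‖z‖ * ‖v‖) := by
  have h₁ : |z.1 * v.2| ≤ ‖z‖ * ‖v‖ := by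
    rw [abs_mul]
    exact mul_le_mul (norm_fst_le z) (norm_snd_le v) (abs_nonneg _) (norm_nonneg _)
  have h₂ : |z.2 * v.1| ≤ ‖z‖ * ‖v‖ := by
    rw [abs_mul]
    exact mul_le_mul (norm_snd_le z) (norm_fst_le v) (abs_nonneg _) (norm_nonneg _)
  unfold det2
  linarith [le_abs_self (z.1 * v.2), neg_abs_le (z.2 * v.1)]

lemma exists_det2_eq_linearMap (g : ℝ × ℝ →ₗ[ℝ] ℝ) : ∃ w, ∀ z, det2 z w = g z := by
  refine ⟨(-g (0, 1), g (1, 0)), fun z => ?_⟩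
  have hz : z = z.1 • ((1 : ℝ), (0 : ℝ)) + z.2 • ((0 : ℝ), (1 : ℝ)) := by ext <;> simp
  conv_rhs => rw [hz]
  simp only [det2, map_add, map_smul, smul_eq_mul]
  ring

namespace IsGauge

variable {F : ℝ × ℝ → ℝ}

lemma map_zero (hF : IsGauge F) : F 0 = 0 := (hF.2.1 0).2 rfl

lemma pos (hF : IsGauge F) {x : ℝ × ℝ} (hx : x ≠ 0) : 0 < F x :=
  (hF.1 x).lt_of_ne fun h => hx ((hF.2.1 x).1 h.symm)

lemma map_smul_of_nonneg (hF : IsGauge F) {c : ℝ} (hc : 0 ≤ c) (x : ℝ × ℝ) :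
    F (c • x) = c * F x := by
  rcases hc.eq_or_lt with rfl | hc
  · simp [hF.map_zero]
  · exact hF.2.2.1 c x hc

lemma map_inv_smul_self (hF : IsGauge F) {x : ℝ × ℝ} (hx : x ≠ 0) : F ((F x)⁻¹ • x) = 1 := by
  rw [hF.2.2.1 _ _ (inv_pos.2 (hF.pos hx)), inv_mul_cancel₀ (hF.pos hx).ne']

lemma convexOn (hF : IsGauge F) : ConvexOn ℝ univ F := by
  refine ⟨convex_univ, fun x _ y _ a b ha hb _ => ?_⟩
  calc F (a • x + b • y) ≤ F (a • x) + F (b • y) := hF.2.2.2 _ _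
    _ = a • F x + b • F y := by
      rw [hF.map_smul_of_nonneg ha, hF.map_smul_of_nonneg hb, smul_eq_mul, smul_eq_mul]

lemma continuous (hF : IsGauge F) : Continuous F := by
  simpa using hF.convexOn.continuousOn_interior

lemma exists_pos_mul_norm_le (hF : IsGauge F) : ∃ c > 0, ∀ z, c * ‖z‖ ≤ F z := by
  have hne : (Metric.sphere (0 : ℝ × ℝ) 1).Nonempty := ⟨(1, 0), by simp [Prod.norm_def]⟩
  obtain ⟨z₀, hz₀, hmin⟩ :=
    (isCompact_sphere 0 1).exists_isMinOn hne hF.continuous.continuousOn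
  have hz₀ne : z₀ ≠ 0 := ne_zero_of_mem_unit_sphere ⟨z₀, hz₀⟩
  refine ⟨F z₀, hF.pos hz₀ne, fun z => ?_⟩
  rcases eq_or_ne z 0 with rfl | hz
  · simp [hF.map_zero]
  have hnz : 0 < ‖z‖ := norm_pos_iff.2 hz
  have hmem : ‖z‖⁻¹ • z ∈ Metric.sphere (0 : ℝ × ℝ) 1 := by
    simp [norm_smul, hnz.ne']
  have hle : F z₀ ≤ F (‖z‖⁻¹ • z) := hmin hmem
  rw [hF.2.2.1 _ _ (inv_pos.2 hnz), le_inv_mul_iff₀ hnz] at hle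
  linarith

lemma bddAbove_det2 (hF : IsGauge F) (v : ℝ × ℝ) :
    BddAbove {d | ∃ y, F y = 1 ∧ d = det2 y v} := by
  obtain ⟨c, hc, hlow⟩ := hF.exists_pos_mul_norm_le
  refine ⟨2 * (c⁻¹ * ‖v‖), ?_⟩
  rintro _ ⟨z, hz, rfl⟩
  have hz_le : ‖z‖ ≤ c⁻¹ := by
    rw [← one_div, le_div_iff₀ hc]
    linarith [hlow z]
  calc det2 z v ≤ 2 * (‖z‖ * ‖v‖) := det2_le_two_mul_norm z v
    _ ≤ 2 * (c⁻¹ * ‖v‖) := by gcongr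

lemma det2_le_mul_assocGauge (hF : IsGauge F) (x v : ℝ × ℝ) :
    det2 x v ≤ F x * assocGauge F v := by
  rcases eq_or_ne x 0 with rfl | hx
  · simp [det2, hF.map_zero]
  have hle : det2 ((F x)⁻¹ • x) v ≤ assocGauge F v :=
    le_csSup (hF.bddAbove_det2 v) ⟨_, hF.map_inv_smul_self hx, rfl⟩
  rwa [det2_smul_left, inv_mul_le_iff₀ (hF.pos hx)] at hle

lemma exists_det2_le_of_ne_zero (hF : IsGauge F) {x : ℝ × ℝ} (hx : x ≠ 0) :
    ∃ w, (∀ z, det2 z w ≤ F z) ∧ det2 x w = F x := by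
  let f : ℝ × ℝ →ₗ.[ℝ] ℝ := LinearPMap.mkSpanSingleton x (F x) hx
  have hf : ∀ v : f.domain, f v ≤ F v := by
    rintro ⟨_, hv⟩
    obtain ⟨a, rfl⟩ := Submodule.mem_span_singleton.1 hv
    rw [LinearPMap.mkSpanSingleton'_apply, RingHom.id_apply, smul_eq_mul]
    rcases le_or_gt 0 a with ha | ha
    · exact (hF.map_smul_of_nonneg ha x).ge
    · exact (mul_nonpos_of_nonpos_of_nonneg ha.le (hF.1 x)).trans (hF.1 _)
  obtain ⟨g, hgf, hgF⟩ := exists_extension_of_le_sublinear f F (fun c hc z => hF.2.2.1 c z hc)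
    hF.2.2.2 hf
  obtain ⟨w, hw⟩ := exists_det2_eq_linearMap g
  refine ⟨w, fun z => hw z ▸ hgF z, ?_⟩
  rw [hw, hgf ⟨x, Submodule.mem_span_singleton_self x⟩]
  exact LinearPMap.mkSpanSingleton_apply ℝ ℝ hx (F x)

lemma assocGauge_eq_one_of_det2_le (hF : IsGauge F) {x w : ℝ × ℝ} (hx : x ≠ 0)
    (hwF : ∀ z, det2 z w ≤ F z) (hxw : det2 x w = F x) : assocGauge F w = 1 := by
  refine IsGreatest.csSup_eq ⟨⟨_, hF.map_inv_smul_self hx, ?_⟩, ?_⟩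
  · rw [det2_smul_left, hxw, inv_mul_cancel₀ (hF.pos hx).ne']
  · rintro _ ⟨z, hz, rfl⟩
    exact hz ▸ hwF z

lemma exists_assocGauge_eq_one (hF : IsGauge F) (x : ℝ × ℝ) :
    ∃ w, assocGauge F w = 1 ∧ det2 x w = F x := by
  rcases eq_or_ne x 0 with rfl | hx
  · have he : ((1 : ℝ), (0 : ℝ)) ≠ 0 := by simp
    obtain ⟨w, hwF, hew⟩ := hF.exists_det2_le_of_ne_zero he
    exact ⟨w, hF.assocGauge_eq_one_of_det2_le he hwF hew, by simp [det2, hF.map_zero]⟩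
  · obtain ⟨w, hwF, hxw⟩ := hF.exists_det2_le_of_ne_zero hx
    exact ⟨w, hF.assocGauge_eq_one_of_det2_le hx hwF hxw, hxw⟩

theorem assocGauge_assocGauge_neg (hF : IsGauge F) (x : ℝ × ℝ) :
    assocGauge (assocGauge F) (-x) = F x := by
  obtain ⟨w, hw, hxw⟩ := hF.exists_assocGauge_eq_one x
  refine IsGreatest.csSup_eq ⟨⟨w, hw, by rw [det2_neg_right, hxw]⟩, ?_⟩
  rintro _ ⟨u, hu, rfl⟩
  simpa [det2_neg_right, hu] using hF.det2_le_mul_assocGauge x u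

end IsGauge

theorem birkhoff_iff_general (F : ℝ × ℝ → ℝ) (hF : IsGauge F) (x y : ℝ × ℝ) :
    det2 x y = F x * assocGauge F y ↔
      det2 y (-x) = assocGauge F y * assocGauge (assocGauge F) (-x) := by
  rw [det2_neg_right, hF.assocGauge_assocGauge_neg, mul_comm]

theorem birkhoff_iff (F : ℝ × ℝ → ℝ) (hF : IsGauge F) (x y : ℝ × ℝ)
    (hx : x ≠ 0) (hy : y ≠ 0) :
    det2 x y = F x * assocGauge F y ↔
      det2 y (-x) = assocGauge F y * assocGauge (assocGauge F) (-x) :=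
  birkhoff_iff_general F hF x y
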